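/- arXiv:2101.11203 — 2 statements merged into one kernel-verified Lean document; each statement's English description precedes it below -/
import Mathlib

section
/- Bounded local drift: if η_L ≤ 1/(8·L·K), then for every round t and every local step k ∈ {0,…,K}, the local iterates of generalized FedAvg satisfy (1/m)·Σ_{i=1}^m E_t[‖x_{t,k}^i − x_t‖²] ≤ 5·K·η_L²·(σ_L² + 6·K·σ_G²) + 30·K²·η_L²·‖∇f(x_t)‖². -/
/-!
Each worker is treated separately. Unrolling the recursion, `y k - x = -η ∑_{j<k} g j`, and
`g j = ∇F(y j) + ξ j` where the noise `ξ j` is `ℱ (j+1)`-measurable with zero conditional mean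
given `ℱ j`. The noises are therefore orthogonal in `L²`, so `E‖∑_{j<k} ξ j‖² ≤ k σ²`, while
`‖∇F(y j)‖² ≤ 2L²‖y j - x‖² + 2‖∇F x‖²` by Lipschitz continuity. This gives the recursion
`e k ≤ B + ρ ∑_{j<k} e j` for `e k = E‖y k - x‖²`, with `ρ = 4η²KL²`, and discrete Grönwall gives
`e k ≤ B (1 + ρ)^K ≤ B e^{Kρ} ≤ (16/15) B` because `Kρ = 4(ηLK)² ≤ 1/16`. Finally
`‖∇F_i x‖² ≤ 2σ_G² + 2‖∇f x‖²`, and the bound is averaged over the workers.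
-/

open MeasureTheory ProbabilityTheory Finset
open scoped InnerProductSpace NNReal

theorem norm_add_sq_le_two_mul {E : Type*} [SeminormedAddCommGroup E] (a b : E) :
    ‖a + b‖ ^ 2 ≤ 2 * (‖a‖ ^ 2 + ‖b‖ ^ 2) :=
  (pow_le_pow_left₀ (norm_nonneg _) (norm_add_le a b) 2).trans add_sq_le

theorem norm_sq_le_two_mul_norm_sub_sq_add {E : Type*} [SeminormedAddCommGroup E] (a b : E) :
    ‖a‖ ^ 2 ≤ 2 * ‖a - b‖ ^ 2 + 2 * ‖b‖ ^ 2 := by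
  simpa [mul_add] using norm_add_sq_le_two_mul (a - b) b

theorem LipschitzWith.norm_sq_le {E F : Type*} [SeminormedAddCommGroup E]
    [SeminormedAddCommGroup F] {L : ℝ≥0} {f : E → F} (hf : LipschitzWith L f) (z x : E) :
    ‖f z‖ ^ 2 ≤ 2 * L ^ 2 * ‖z - x‖ ^ 2 + 2 * ‖f x‖ ^ 2 :=
  calc ‖f z‖ ^ 2 ≤ 2 * ‖f z - f x‖ ^ 2 + 2 * ‖f x‖ ^ 2 := norm_sq_le_two_mul_norm_sub_sq_add _ _
    _ ≤ 2 * (L * ‖z - x‖) ^ 2 + 2 * ‖f x‖ ^ 2 := by gcongr; exact hf.norm_sub_le z x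
    _ = _ := by ring

theorem norm_sum_sq_le_card_mul {ι E : Type*} [SeminormedAddCommGroup E] (s : Finset ι)
    (v : ι → E) : ‖∑ i ∈ s, v i‖ ^ 2 ≤ #s * ∑ i ∈ s, ‖v i‖ ^ 2 :=
  (pow_le_pow_left₀ (norm_nonneg _) (norm_sum_le s v) 2).trans sq_sum_le_card_mul_sum_sq

theorem le_mul_one_add_pow_of_le_add_mul_sum {e : ℕ → ℝ} {B ρ : ℝ} {K : ℕ} (hρ : 0 ≤ ρ)
    (h : ∀ k ≤ K, e k ≤ B + ρ * ∑ j ∈ range k, e j) : ∀ k ≤ K, e k ≤ B * (1 + ρ) ^ k := by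
  intro k
  induction k using Nat.strong_induction_on with
  | _ k ih =>
    intro hk
    have hsum : ∑ j ∈ range k, e j ≤ ∑ j ∈ range k, B * (1 + ρ) ^ j :=
      sum_le_sum fun j hj => ih j (mem_range.1 hj) ((mem_range.1 hj).le.trans hk)
    have hgeom : ρ * ∑ j ∈ range k, (1 + ρ) ^ j = (1 + ρ) ^ k - 1 := by
      simpa [mul_comm] using geom_sum_mul (1 + ρ) k
    calc e k ≤ B + ρ * ∑ j ∈ range k, e j := h k hk
      _ ≤ B + ρ * ∑ j ∈ range k, B * (1 + ρ) ^ j := by gcongr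
      _ = B * (1 + ρ) ^ k := by rw [← mul_sum, mul_left_comm, hgeom]; ring

theorem one_add_pow_le_inv_one_sub_mul {ρ : ℝ} {n : ℕ} (hρ : 0 ≤ ρ) (hnρ : n * ρ < 1) :
    (1 + ρ) ^ n ≤ (1 - n * ρ)⁻¹ := by
  calc (1 + ρ) ^ n ≤ Real.exp ρ ^ n := by
        gcongr; linarith [Real.add_one_le_exp ρ]
    _ = Real.exp (n * ρ) := (Real.exp_nat_mul ρ n).symm
    _ ≤ 1 / (1 - n * ρ) := Real.exp_bound_div_one_sub_of_interval (by positivity) hnρ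
    _ = (1 - n * ρ)⁻¹ := one_div _

section
variable {Ω E : Type*} [NormedAddCommGroup E] [InnerProductSpace ℝ E]
  {m m₀ : MeasurableSpace Ω} {μ : Measure Ω}

theorem MeasureTheory.MemLp.integrable_inner {A N : Ω → E} (hA : MemLp A 2 μ) (hN : MemLp N 2 μ) :
    Integrable (fun ω => ⟪A ω, N ω⟫_ℝ) μ :=
  (L2.integrable_inner (𝕜 := ℝ) hA.toLp hN.toLp).congr <| by
    filter_upwards [hA.coeFn_toLp, hN.coeFn_toLp] with ω hAω hNω
    rw [hAω, hNω]

theorem integral_inner_eq_zero_of_condExp_eq_zero [CompleteSpace E] [IsFiniteMeasure μ]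
    (hm : m ≤ m₀) {A N : Ω → E} (hA : StronglyMeasurable[m] A)
    (hAN : Integrable (fun ω => ⟪A ω, N ω⟫_ℝ) μ) (hN : Integrable N μ)
    (hN0 : μ[N|m] =ᵐ[μ] 0) : ∫ ω, ⟪A ω, N ω⟫_ℝ ∂μ = 0 := by
  have hpull : μ[fun ω => ⟪A ω, N ω⟫_ℝ|m] =ᵐ[μ] fun ω => ⟪A ω, (μ[N|m]) ω⟫_ℝ :=
    condExp_bilin_of_stronglyMeasurable_left (innerSL ℝ) hA hAN hN
  rw [← integral_condExp hm, integral_eq_zero_of_ae]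
  filter_upwards [hpull, hN0] with ω hω hω0
  simpa [hω0] using hω

theorem integral_le_of_condExp_le_const [IsProbabilityMeasure μ] (hm : m ≤ m₀) {f : Ω → ℝ}
    {c : ℝ} (hf : μ[f|m] ≤ᵐ[μ] fun _ => c) : ∫ ω, f ω ∂μ ≤ c := by
  rw [← integral_condExp hm]
  simpa using integral_mono_ae integrable_condExp (integrable_const c) hf

theorem integral_norm_sum_range_sq_of_condExp_eq_zero [CompleteSpace E] [IsFiniteMeasure μ]
    (ℱ : Filtration ℕ m₀) {N : ℕ → Ω → E} {n : ℕ}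
    (hmeas : ∀ j < n, StronglyMeasurable[ℱ (j + 1)] (N j)) (hL2 : ∀ j < n, MemLp (N j) 2 μ)
    (hN0 : ∀ j < n, μ[N j|ℱ j] =ᵐ[μ] 0) :
    ∫ ω, ‖∑ j ∈ range n, N j ω‖ ^ 2 ∂μ = ∑ j ∈ range n, ∫ ω, ‖N j ω‖ ^ 2 ∂μ := by
  induction n with
  | zero => simp
  | succ n ih =>
    have hlt : n < n + 1 := n.lt_succ_self
    have hS_meas : StronglyMeasurable[ℱ n] fun ω => ∑ j ∈ range n, N j ω :=
      Finset.stronglyMeasurable_fun_sum _ fun j hj =>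
        (hmeas j (by grind)).mono (ℱ.mono (mem_range.1 hj))
    have hS_L2 : MemLp (fun ω => ∑ j ∈ range n, N j ω) 2 μ :=
      memLp_finsetSum _ fun j hj => hL2 j (by grind)
    have horth : ∫ ω, ⟪∑ j ∈ range n, N j ω, N n ω⟫_ℝ ∂μ = 0 :=
      integral_inner_eq_zero_of_condExp_eq_zero (ℱ.le n) hS_meas
        (hS_L2.integrable_inner (hL2 n hlt)) ((hL2 n hlt).integrable one_le_two) (hN0 n hlt)
    simp_rw [sum_range_succ, norm_add_sq_real]
    rw [integral_add, integral_add, integral_const_mul, horth,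
      ih (fun j hj => hmeas j (by omega)) (fun j hj => hL2 j (by omega))
        (fun j hj => hN0 j (by omega))]
    · ring
    · exact hS_L2.integrable_norm_pow two_ne_zero
    · exact (hS_L2.integrable_inner (hL2 n hlt)).const_mul 2
    · exact (hS_L2.integrable_norm_pow two_ne_zero).add
        ((hS_L2.integrable_inner (hL2 n hlt)).const_mul 2)
    · exact (hL2 n hlt).integrable_norm_pow two_ne_zero

end

section LocalSGD

variable {Ω E : Type*} [NormedAddCommGroup E] [InnerProductSpace ℝ E] {m₀ : MeasurableSpace Ω}

structure IsLocalSGD (μ : Measure Ω) (ℱ : Filtration ℕ m₀) (grad : E → E) (η : ℝ) (K : ℕ)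
    (x : E) (y g : ℕ → Ω → E) : Prop where
  iterate_zero : ∀ ω, y 0 ω = x
  iterate_succ : ∀ k < K, ∀ ω, y (k + 1) ω = y k ω - η • g k ω
  stronglyMeasurable_iterate : ∀ k, StronglyMeasurable[ℱ k] (y k)
  stronglyMeasurable_stochGrad : ∀ k, StronglyMeasurable[ℱ (k + 1)] (g k)
  memLp_stochGrad : ∀ k, MemLp (g k) 2 μ
  condExp_stochGrad : ∀ k, μ[g k|ℱ k] =ᵐ[μ] fun ω => grad (y k ω)

namespace IsLocalSGD

variable {μ : Measure Ω} {ℱ : Filtration ℕ m₀} {grad : E → E} {η : ℝ} {K : ℕ} {x : E}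
  {y g : ℕ → Ω → E} {L : ℝ≥0} {k : ℕ}

theorem sub_eq (hS : IsLocalSGD μ ℱ grad η K x y g) (hk : k ≤ K) (ω : Ω) :
    y k ω - x = -(η • ∑ j ∈ range k, g j ω) := by
  induction k with
  | zero => simp [hS.iterate_zero ω]
  | succ k ih =>
    rw [hS.iterate_succ k hk ω, sum_range_succ, smul_add, sub_right_comm, ih (by omega)]
    abel

theorem memLp_sub (hS : IsLocalSGD μ ℱ grad η K x y g) (hk : k ≤ K) :
    MemLp (fun ω => y k ω - x) 2 μ := by
  simp_rw [hS.sub_eq hk]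
  exact ((memLp_finsetSum _ fun j _ => hS.memLp_stochGrad j).const_smul η).neg

theorem memLp_grad_iterate [IsFiniteMeasure μ] (hS : IsLocalSGD μ ℱ grad η K x y g)
    (hgrad : LipschitzWith L grad) (hk : k ≤ K) : MemLp (fun ω => grad (y k ω)) 2 μ := by
  have hdiff : MemLp (fun ω => grad (y k ω) - grad x) 2 μ :=
    (hS.memLp_sub hk).of_le_mul (c := L)
      ((hgrad.continuous.comp_stronglyMeasurable
        ((hS.stronglyMeasurable_iterate k).mono (ℱ.le k))).sub
          stronglyMeasurable_const).aestronglyMeasurable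
      (ae_of_all _ fun ω => hgrad.norm_sub_le _ _)
  convert hdiff.add (memLp_const (grad x)) using 1
  ext ω
  simp

theorem condExp_noise_eq_zero [CompleteSpace E] [IsFiniteMeasure μ]
    (hS : IsLocalSGD μ ℱ grad η K x y g) (hgrad : LipschitzWith L grad) (hk : k ≤ K) :
    μ[fun ω => g k ω - grad (y k ω)|ℱ k] =ᵐ[μ] 0 := by
  show μ[g k - fun ω => grad (y k ω)|ℱ k] =ᵐ[μ] 0
  have hG := hS.memLp_grad_iterate hgrad hk
  have hG_meas : StronglyMeasurable[ℱ k] fun ω => grad (y k ω) :=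
    hgrad.continuous.comp_stronglyMeasurable (hS.stronglyMeasurable_iterate k)
  filter_upwards [condExp_sub ((hS.memLp_stochGrad k).integrable one_le_two)
      (hG.integrable one_le_two) (ℱ k), hS.condExp_stochGrad k] with ω hsub hunb
  rw [condExp_of_stronglyMeasurable (ℱ.le k) hG_meas (hG.integrable one_le_two)] at hsub
  simpa [hunb] using hsub

theorem norm_sub_sq_le (hS : IsLocalSGD μ ℱ grad η K x y g) (hgrad : LipschitzWith L grad)
    (hk : k ≤ K) (ω : Ω) :
    ‖y k ω - x‖ ^ 2 ≤ 2 * η ^ 2 * ‖∑ j ∈ range k, (g j ω - grad (y j ω))‖ ^ 2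
      + 4 * η ^ 2 * k * L ^ 2 * ∑ j ∈ range k, ‖y j ω - x‖ ^ 2
      + 4 * η ^ 2 * k ^ 2 * ‖grad x‖ ^ 2 := by
  have hsplit : ∑ j ∈ range k, g j ω
      = ∑ j ∈ range k, (g j ω - grad (y j ω)) + ∑ j ∈ range k, grad (y j ω) := by
    rw [← sum_add_distrib]; simp
  calc ‖y k ω - x‖ ^ 2 = η ^ 2 * ‖∑ j ∈ range k, g j ω‖ ^ 2 := by
        rw [hS.sub_eq hk, norm_neg, norm_smul, mul_pow, Real.norm_eq_abs, sq_abs]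
    _ ≤ η ^ 2 * (2 * (‖∑ j ∈ range k, (g j ω - grad (y j ω))‖ ^ 2
          + ‖∑ j ∈ range k, grad (y j ω)‖ ^ 2)) := by
        rw [hsplit]; gcongr; exact norm_add_sq_le_two_mul _ _
    _ ≤ η ^ 2 * (2 * (‖∑ j ∈ range k, (g j ω - grad (y j ω))‖ ^ 2
          + k * ∑ j ∈ range k, ‖grad (y j ω)‖ ^ 2)) := by
        gcongr; simpa using norm_sum_sq_le_card_mul (range k) fun j => grad (y j ω)
    _ ≤ η ^ 2 * (2 * (‖∑ j ∈ range k, (g j ω - grad (y j ω))‖ ^ 2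
          + k * ∑ j ∈ range k, (2 * L ^ 2 * ‖y j ω - x‖ ^ 2 + 2 * ‖grad x‖ ^ 2))) := by
        gcongr with j; exact hgrad.norm_sq_le _ _
    _ = _ := by
        rw [sum_add_distrib, ← mul_sum, sum_const, card_range, nsmul_eq_mul]
        ring

theorem integral_norm_sum_noise_sq_le [CompleteSpace E] [IsFiniteMeasure μ]
    (hS : IsLocalSGD μ ℱ grad η K x y g) (hgrad : LipschitzWith L grad) {σ : ℝ}
    (hvar : ∀ k, ∫ ω, ‖g k ω - grad (y k ω)‖ ^ 2 ∂μ ≤ σ ^ 2) (hk : k ≤ K) :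
    ∫ ω, ‖∑ j ∈ range k, (g j ω - grad (y j ω))‖ ^ 2 ∂μ ≤ k * σ ^ 2 := by
  rw [integral_norm_sum_range_sq_of_condExp_eq_zero (N := fun j ω => g j ω - grad (y j ω)) ℱ
    (fun j _ => (hS.stronglyMeasurable_stochGrad j).sub
      ((hgrad.continuous.comp_stronglyMeasurable (hS.stronglyMeasurable_iterate j)).mono
        (ℱ.mono j.le_succ)))
    (fun j hj => (hS.memLp_stochGrad j).sub (hS.memLp_grad_iterate hgrad (by omega)))
    (fun j hj => hS.condExp_noise_eq_zero hgrad (by omega))]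
  simpa using sum_le_sum fun j (_ : j ∈ range k) => hvar j

theorem integral_norm_sub_sq_le_add_mul_sum [CompleteSpace E] [IsProbabilityMeasure μ]
    (hS : IsLocalSGD μ ℱ grad η K x y g) (hgrad : LipschitzWith L grad) {σ : ℝ}
    (hvar : ∀ k, ∫ ω, ‖g k ω - grad (y k ω)‖ ^ 2 ∂μ ≤ σ ^ 2) (hk : k ≤ K) :
    ∫ ω, ‖y k ω - x‖ ^ 2 ∂μ ≤ 2 * K * η ^ 2 * σ ^ 2 + 4 * K ^ 2 * η ^ 2 * ‖grad x‖ ^ 2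
      + 4 * η ^ 2 * K * L ^ 2 * ∑ j ∈ range k, ∫ ω, ‖y j ω - x‖ ^ 2 ∂μ := by
  have hdrift_int (j : ℕ) (hj : j ≤ K) : Integrable (fun ω => ‖y j ω - x‖ ^ 2) μ :=
    (hS.memLp_sub hj).integrable_norm_pow two_ne_zero
  have hsum_int : Integrable (fun ω => ∑ j ∈ range k, ‖y j ω - x‖ ^ 2) μ :=
    integrable_finsetSum _ fun j hj => hdrift_int j (by grind)
  have hnoise_int : Integrable (fun ω => ‖∑ j ∈ range k, (g j ω - grad (y j ω))‖ ^ 2) μ :=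
    (memLp_finsetSum _ fun j hj => (hS.memLp_stochGrad j).sub
      (hS.memLp_grad_iterate hgrad (by grind))).integrable_norm_pow two_ne_zero
  have hsum_nonneg : 0 ≤ ∑ j ∈ range k, ∫ ω, ‖y j ω - x‖ ^ 2 ∂μ :=
    sum_nonneg fun j _ => integral_nonneg fun ω => by positivity
  have hkK : (k : ℝ) ≤ K := by exact_mod_cast hk
  calc ∫ ω, ‖y k ω - x‖ ^ 2 ∂μ
      ≤ ∫ ω, (2 * η ^ 2 * ‖∑ j ∈ range k, (g j ω - grad (y j ω))‖ ^ 2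
          + 4 * η ^ 2 * k * L ^ 2 * ∑ j ∈ range k, ‖y j ω - x‖ ^ 2
          + 4 * η ^ 2 * k ^ 2 * ‖grad x‖ ^ 2) ∂μ :=
        integral_mono (hdrift_int k hk)
          (((hnoise_int.const_mul _).add (hsum_int.const_mul _)).add (integrable_const _))
          (hS.norm_sub_sq_le hgrad hk)
    _ = 2 * η ^ 2 * ∫ ω, ‖∑ j ∈ range k, (g j ω - grad (y j ω))‖ ^ 2 ∂μ
          + 4 * η ^ 2 * k * L ^ 2 * ∑ j ∈ range k, ∫ ω, ‖y j ω - x‖ ^ 2 ∂μ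
          + 4 * η ^ 2 * k ^ 2 * ‖grad x‖ ^ 2 := by
        rw [integral_add, integral_add, integral_const_mul, integral_const_mul,
          integral_finsetSum _ fun j hj => hdrift_int j (by grind)]
        · simp
        · exact hnoise_int.const_mul _
        · exact hsum_int.const_mul _
        · exact (hnoise_int.const_mul _).add (hsum_int.const_mul _)
        · exact integrable_const _
    _ ≤ 2 * η ^ 2 * (k * σ ^ 2)
          + 4 * η ^ 2 * k * L ^ 2 * ∑ j ∈ range k, ∫ ω, ‖y j ω - x‖ ^ 2 ∂μ
          + 4 * η ^ 2 * k ^ 2 * ‖grad x‖ ^ 2 := by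
        gcongr; exact hS.integral_norm_sum_noise_sq_le hgrad hvar hk
    _ ≤ _ := by
        have h₁ := mul_le_mul_of_nonneg_left hkK (by positivity : (0 : ℝ) ≤ η ^ 2 * σ ^ 2)
        have h₂ := mul_le_mul_of_nonneg_left hkK
          (mul_nonneg (by positivity : (0 : ℝ) ≤ η ^ 2 * L ^ 2) hsum_nonneg)
        have h₃ := mul_le_mul_of_nonneg_left (pow_le_pow_left₀ k.cast_nonneg hkK 2)
          (by positivity : (0 : ℝ) ≤ η ^ 2 * ‖grad x‖ ^ 2)
        linarith

theorem integral_norm_sub_sq_le [CompleteSpace E] [IsProbabilityMeasure μ]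
    (hS : IsLocalSGD μ ℱ grad η K x y g) (hgrad : LipschitzWith L grad) {σ : ℝ}
    (hvar : ∀ k, ∫ ω, ‖g k ω - grad (y k ω)‖ ^ 2 ∂μ ≤ σ ^ 2) (hη : 0 ≤ η)
    (hηLK : η * L * K ≤ 1 / 8) (hk : k ≤ K) :
    ∫ ω, ‖y k ω - x‖ ^ 2 ∂μ ≤ 3 * K * η ^ 2 * σ ^ 2 + 5 * K ^ 2 * η ^ 2 * ‖grad x‖ ^ 2 := by
  set ρ : ℝ := 4 * η ^ 2 * K * L ^ 2
  have hρ : 0 ≤ ρ := by positivity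
  have hKρ : K * ρ ≤ 1 / 16 := by
    have hηLK_nonneg : 0 ≤ η * L * K := by positivity
    have : K * ρ = 4 * (η * L * K) ^ 2 := by ring
    nlinarith
  have hpow : (1 + ρ) ^ k ≤ 16 / 15 :=
    calc (1 + ρ) ^ k ≤ (1 + ρ) ^ K := pow_le_pow_right₀ (by linarith) hk
      _ ≤ (1 - K * ρ)⁻¹ := one_add_pow_le_inv_one_sub_mul hρ (by linarith)
      _ ≤ 16 / 15 := by rw [inv_le_comm₀ (by linarith) (by norm_num)]; linarith
  calc ∫ ω, ‖y k ω - x‖ ^ 2 ∂μ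
      ≤ (2 * K * η ^ 2 * σ ^ 2 + 4 * K ^ 2 * η ^ 2 * ‖grad x‖ ^ 2) * (1 + ρ) ^ k :=
        le_mul_one_add_pow_of_le_add_mul_sum hρ
          (fun k hk => hS.integral_norm_sub_sq_le_add_mul_sum hgrad hvar hk) k hk
    _ ≤ (2 * K * η ^ 2 * σ ^ 2 + 4 * K ^ 2 * η ^ 2 * ‖grad x‖ ^ 2) * (16 / 15) := by
        gcongr
    _ ≤ _ := by
        have : 0 ≤ K * η ^ 2 * σ ^ 2 := by positivity
        have : 0 ≤ K ^ 2 * η ^ 2 * ‖grad x‖ ^ 2 := by positivity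
        linarith

end IsLocalSGD

end LocalSGD

theorem bounded_local_drift_general
    {d m K : ℕ} (hm : 0 < m) (hK : 0 < K)
    (L σL σG ηL : ℝ) (hL : 0 < L) (hηL : 0 < ηL)
    (F : Fin m → EuclideanSpace ℝ (Fin d) → ℝ)
    (hFlip : ∀ i, LipschitzWith (Real.toNNReal L) (fun x => gradient (F i) x))
    (f : EuclideanSpace ℝ (Fin d) → ℝ)
    (hhet : ∀ i x, ‖gradient (F i) x - gradient f x‖ ^ 2 ≤ σG ^ 2)
    {Ω : Type} [MeasureSpace Ω] [IsProbabilityMeasure (ℙ : Measure Ω)]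
    (𝒢 : ℕ → MeasurableSpace Ω)
    (h𝒢 : ∀ k, 𝒢 k ≤ (inferInstance : MeasurableSpace Ω)) (h𝒢mono : Monotone 𝒢)
    (xt : EuclideanSpace ℝ (Fin d))
    (g y : Fin m → ℕ → Ω → EuclideanSpace ℝ (Fin d))
    (hy0 : ∀ i ω, y i 0 ω = xt)
    (hyrec : ∀ i k ω, k < K → y i (k + 1) ω = y i k ω - ηL • g i k ω)
    (hymeas : ∀ i k, Measurable[𝒢 k] (y i k))
    (hgmeas : ∀ i k, Measurable[𝒢 (k + 1)] (g i k))
    (hgsq : ∀ i k, Integrable (fun ω => ‖g i k ω‖ ^ 2) ℙ)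
    (hunbiased : ∀ i k, (ℙ : Measure Ω)[g i k | 𝒢 k]
        =ᵐ[ℙ] fun ω => gradient (F i) (y i k ω))
    (hvar : ∀ i k, (ℙ : Measure Ω)[(fun ω => ‖g i k ω - gradient (F i) (y i k ω)‖ ^ 2) | 𝒢 k]
        ≤ᵐ[ℙ] fun _ => σL ^ 2)
    (hηL8 : ηL ≤ 1 / (8 * L * K)) :
    ∀ k ≤ K, (1 / (m : ℝ)) * ∑ i, ∫ ω, ‖y i k ω - xt‖ ^ 2 ∂ℙ
      ≤ 5 * K * ηL ^ 2 * (σL ^ 2 + 6 * K * σG ^ 2)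
        + 30 * K ^ 2 * ηL ^ 2 * ‖gradient f xt‖ ^ 2 := by
  intro k hk
  let ℱ : Filtration ℕ (inferInstance : MeasurableSpace Ω) := ⟨𝒢, h𝒢mono, h𝒢⟩
  have hlocal (i : Fin m) : IsLocalSGD ℙ ℱ (gradient (F i)) ηL K xt (y i) (g i) :=
    { iterate_zero := hy0 i
      iterate_succ := fun k hk ω => hyrec i k ω hk
      stronglyMeasurable_iterate := fun k => (hymeas i k).stronglyMeasurable
      stronglyMeasurable_stochGrad := fun k => (hgmeas i k).stronglyMeasurable
      memLp_stochGrad := fun k => (memLp_two_iff_integrable_sq_norm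
        ((hgmeas i k).mono (h𝒢 _) le_rfl).aestronglyMeasurable).2 (hgsq i k)
      condExp_stochGrad := hunbiased i }
  have hηLK : ηL * Real.toNNReal L * K ≤ 1 / 8 := by
    rw [Real.coe_toNNReal L hL.le]
    have := (le_div_iff₀ (by positivity)).1 hηL8
    linarith
  have hbound (i : Fin m) : ∫ ω, ‖y i k ω - xt‖ ^ 2 ∂ℙ
      ≤ 5 * K * ηL ^ 2 * (σL ^ 2 + 6 * K * σG ^ 2)
        + 30 * K ^ 2 * ηL ^ 2 * ‖gradient f xt‖ ^ 2 := by
    have hworker := (hlocal i).integral_norm_sub_sq_le (hFlip i)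
      (fun k => integral_le_of_condExp_le_const (h𝒢 k) (hvar i k)) hηL.le hηLK hk
    have hgrad := norm_sq_le_two_mul_norm_sub_sq_add (gradient (F i) xt) (gradient f xt)
    nlinarith [hhet i xt, sq_nonneg (K * ηL), sq_nonneg σL, sq_nonneg σG,
      sq_nonneg ‖gradient f xt‖, mul_nonneg (Nat.cast_nonneg K) (sq_nonneg ηL)]
  calc (1 / (m : ℝ)) * ∑ i, ∫ ω, ‖y i k ω - xt‖ ^ 2 ∂ℙ
      ≤ (1 / (m : ℝ)) * ∑ _i : Fin m, (5 * K * ηL ^ 2 * (σL ^ 2 + 6 * K * σG ^ 2)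
        + 30 * K ^ 2 * ηL ^ 2 * ‖gradient f xt‖ ^ 2) := by
        gcongr with i; exact hbound i
    _ = _ := by
        rw [sum_const, card_univ, Fintype.card_fin, nsmul_eq_mul]
        field_simp

/-- **Bounded local drift (Lemma: bounded `x_{t,k}^i − x_t`).**
Setting: one round of generalized FedAvg, conditioned on the current server iterate
`x_t = xt` (a deterministic point, since `E_t` conditions on `x_t`).  Each worker
`i ∈ {1,…,m}` runs `K` local SGD steps `y i (k+1) = y i k − η_L • g i k` starting from
`y i 0 = xt`, where the stochastic gradients `g i k` are conditionally unbiased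
(`E[g i k | 𝒢 k] = ∇F i (y i k)` for a filtration `𝒢` recording all information up to
the evaluation point), have conditional variance at most `σ_L²`, and the noises are
mutually conditionally independent across `i` (independence across `k` is encoded by
the filtration structure).  The local losses `F i` are differentiable with
`L`-Lipschitz gradients, `f = (1/m) ∑ i, F i`, and `‖∇F i x − ∇f x‖² ≤ σ_G²` for all
`x, i`.  If `η_L ≤ 1/(8LK)`, then for every `k ∈ {0,…,K}`,
`(1/m) ∑ i, E_t[‖y i k − x_t‖²] ≤ 5Kη_L²(σ_L² + 6Kσ_G²) + 30K²η_L²‖∇f(x_t)‖²`. -/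
theorem bounded_local_drift
    {d m K : ℕ} (hd : 0 < d) (hm : 0 < m) (hK : 0 < K)
    (L σL σG ηL : ℝ) (hL : 0 < L) (hσL : 0 ≤ σL) (hσG : 0 ≤ σG) (hηL : 0 < ηL)
    (F : Fin m → EuclideanSpace ℝ (Fin d) → ℝ)
    (hFdiff : ∀ i, Differentiable ℝ (F i))
    (hFlip : ∀ i, LipschitzWith (Real.toNNReal L) (fun x => gradient (F i) x))
    (f : EuclideanSpace ℝ (Fin d) → ℝ)
    (hf : f = fun x => (1 / (m : ℝ)) * ∑ i, F i x)
    (hhet : ∀ i x, ‖gradient (F i) x - gradient f x‖ ^ 2 ≤ σG ^ 2)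
    {Ω : Type} [MeasureSpace Ω] [IsProbabilityMeasure (ℙ : Measure Ω)]
    [StandardBorelSpace Ω]
    (𝒢 : ℕ → MeasurableSpace Ω)
    (h𝒢 : ∀ k, 𝒢 k ≤ (inferInstance : MeasurableSpace Ω)) (h𝒢mono : Monotone 𝒢)
    (xt : EuclideanSpace ℝ (Fin d))
    (g y : Fin m → ℕ → Ω → EuclideanSpace ℝ (Fin d))
    (hy0 : ∀ i ω, y i 0 ω = xt)
    (hyrec : ∀ i k ω, k < K → y i (k + 1) ω = y i k ω - ηL • g i k ω)
    (hymeas : ∀ i k, Measurable[𝒢 k] (y i k))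
    (hgmeas : ∀ i k, Measurable[𝒢 (k + 1)] (g i k))
    (hgint : ∀ i k, Integrable (g i k) ℙ)
    (hgsq : ∀ i k, Integrable (fun ω => ‖g i k ω‖ ^ 2) ℙ)
    (hunbiased : ∀ i k, (ℙ : Measure Ω)[g i k | 𝒢 k]
        =ᵐ[ℙ] fun ω => gradient (F i) (y i k ω))
    (hvar : ∀ i k, (ℙ : Measure Ω)[(fun ω => ‖g i k ω - gradient (F i) (y i k ω)‖ ^ 2) | 𝒢 k]
        ≤ᵐ[ℙ] fun _ => σL ^ 2)
    (hindep : ∀ k, iCondIndepFun (𝒢 k) (h𝒢 k) (m := fun _ : Fin m => inferInstance)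
        (fun i ω => g i k ω - gradient (F i) (y i k ω)) ℙ)
    (hηL8 : ηL ≤ 1 / (8 * L * K)) :
    ∀ k ≤ K, (1 / (m : ℝ)) * ∑ i, ∫ ω, ‖y i k ω - xt‖ ^ 2 ∂ℙ
      ≤ 5 * K * ηL ^ 2 * (σL ^ 2 + 6 * K * σG ^ 2)
        + 30 * K ^ 2 * ηL ^ 2 * ‖gradient f xt‖ ^ 2 :=
  bounded_local_drift_general hm hK L σL σG ηL hL hηL F hFlip f hhet 𝒢 h𝒢 h𝒢mono xt g y hy0 hyrec
    hymeas hgmeas hgsq hunbiased hvar hηL8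
end

section
/- Cross-term comparison inequality: let m ≥ 2 and 2 ≤ n ≤ m be integers, let η, η_L, L > 0 be reals and K a positive integer with η·η_L·K·L ≤ n·(m−1)/(m·(n−1)). Then for any vectors θ_1,…,θ_m in a real inner product space, (L·η²·η_L²/(2n²))·[ (n²/m)·Σ_{i=1}^m ‖θ_i‖² − (n·(n−1)/(2m·(m−1)))·Σ_{(i,j): i≠j} ‖θ_i − θ_j‖² ] − (η·η_L/(2·K·m²))·‖Σ_{i=1}^m θ_i‖² ≤ L·η²·η_L²·((m−n)/(2·m·n·(m−1)))·Σ_{i=1}^m ‖θ_i‖², where Σ_{(i,j): i≠j} ranges over all ordered pairs with i ≠ j. -/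
open Finset

/-- **Cross-term comparison inequality.** Let `m ≥ 2` and `2 ≤ n ≤ m` be integers,
`η, η_L, L > 0` reals and `K` a positive integer with
`η·η_L·K·L ≤ n·(m−1)/(m·(n−1))`. Then for any vectors `θ 1, …, θ m` in a real inner
product space,
`(L·η²·η_L²/(2n²))·[(n²/m)·∑ ‖θ i‖² − (n(n−1)/(2m(m−1)))·∑_{i≠j} ‖θ i − θ j‖²]
  − (η·η_L/(2Km²))·‖∑ θ i‖² ≤ L·η²·η_L²·((m−n)/(2mn(m−1)))·∑ ‖θ i‖²`. -/
theorem cross_term_comparison {V : Type*} [NormedAddCommGroup V] [InnerProductSpace ℝ V]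
    (m n K : ℕ) (hm : 2 ≤ m) (hn : 2 ≤ n) (hnm : n ≤ m) (hK : 0 < K)
    (η ηL L : ℝ) (hη : 0 < η) (hηL : 0 < ηL) (hL : 0 < L)
    (hstep : η * ηL * K * L ≤ (n : ℝ) * ((m : ℝ) - 1) / ((m : ℝ) * ((n : ℝ) - 1)))
    (θ : Fin m → V) :
    (L * η ^ 2 * ηL ^ 2 / (2 * (n : ℝ) ^ 2)) *
        (((n : ℝ) ^ 2 / (m : ℝ)) * ∑ i, ‖θ i‖ ^ 2
          - ((n : ℝ) * ((n : ℝ) - 1) / (2 * (m : ℝ) * ((m : ℝ) - 1))) *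
              ∑ p ∈ (univ : Finset (Fin m × Fin m)).filter (fun p => p.1 ≠ p.2),
                ‖θ p.1 - θ p.2‖ ^ 2)
      - (η * ηL / (2 * (K : ℝ) * (m : ℝ) ^ 2)) * ‖∑ i, θ i‖ ^ 2
      ≤ L * η ^ 2 * ηL ^ 2 * (((m : ℝ) - (n : ℝ)) / (2 * (m : ℝ) * (n : ℝ) * ((m : ℝ) - 1)))
          * ∑ i, ‖θ i‖ ^ 2 := by
  have hsum : ∑ p ∈ (univ : Finset (Fin m × Fin m)).filter (fun p => p.1 ≠ p.2),
      ‖θ p.1 - θ p.2‖ ^ 2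
      = 2 * (m : ℝ) * (∑ i, ‖θ i‖ ^ 2) - 2 * ‖∑ i, θ i‖ ^ 2 := by
    have h0 : ∑ p ∈ (univ : Finset (Fin m × Fin m)).filter (fun p => p.1 ≠ p.2),
        ‖θ p.1 - θ p.2‖ ^ 2 = ∑ p : Fin m × Fin m, ‖θ p.1 - θ p.2‖ ^ 2 := by
      apply Finset.sum_subset (Finset.filter_subset _ _)
      intro p _ hp
      simp only [Finset.mem_filter, Finset.mem_univ, true_and, not_not] at hp
      simp [hp]
    rw [h0, Fintype.sum_prod_type]
    simp_rw [norm_sub_sq_real]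
    simp only [Finset.sum_add_distrib, Finset.sum_sub_distrib, Finset.sum_const,
      Finset.card_univ, Fintype.card_fin, nsmul_eq_mul, ← Finset.mul_sum,
      ← inner_sum, ← sum_inner, real_inner_self_eq_norm_sq]
    ring
  rw [hsum]
  set S : ℝ := ∑ i, ‖θ i‖ ^ 2 with hS
  set T : ℝ := ‖∑ i, θ i‖ ^ 2 with hT
  have hT0 : 0 ≤ T := sq_nonneg _
  have hM : (2 : ℝ) ≤ (m : ℝ) := by exact_mod_cast hm
  have hN : (2 : ℝ) ≤ (n : ℝ) := by exact_mod_cast hn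
  have hNM : (n : ℝ) ≤ (m : ℝ) := by exact_mod_cast hnm
  have hKr : (1 : ℝ) ≤ (K : ℝ) := by exact_mod_cast hK
  have hMpos : (0 : ℝ) < (m : ℝ) := by linarith
  have hNpos : (0 : ℝ) < (n : ℝ) := by linarith
  have hM1 : (0 : ℝ) < (m : ℝ) - 1 := by linarith
  have hN1 : (0 : ℝ) < (n : ℝ) - 1 := by linarith
  have hKpos : (0 : ℝ) < (K : ℝ) := by linarith
  have heq : (L * η ^ 2 * ηL ^ 2 / (2 * (n : ℝ) ^ 2)) *
        (((n : ℝ) ^ 2 / (m : ℝ)) * S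
          - ((n : ℝ) * ((n : ℝ) - 1) / (2 * (m : ℝ) * ((m : ℝ) - 1))) *
              (2 * (m : ℝ) * S - 2 * T))
      - (η * ηL / (2 * (K : ℝ) * (m : ℝ) ^ 2)) * T
      - L * η ^ 2 * ηL ^ 2 * (((m : ℝ) - (n : ℝ)) / (2 * (m : ℝ) * (n : ℝ) * ((m : ℝ) - 1))) * S
      = (L * η ^ 2 * ηL ^ 2 * ((n : ℝ) - 1) / (2 * (n : ℝ) * (m : ℝ) * ((m : ℝ) - 1))
          - η * ηL / (2 * (K : ℝ) * (m : ℝ) ^ 2)) * T := by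
    field_simp
    ring
  have hcoef : L * η ^ 2 * ηL ^ 2 * ((n : ℝ) - 1) / (2 * (n : ℝ) * (m : ℝ) * ((m : ℝ) - 1))
      ≤ η * ηL / (2 * (K : ℝ) * (m : ℝ) ^ 2) := by
    rw [div_le_div_iff₀ (by positivity) (by positivity)]
    have h2 := mul_le_mul_of_nonneg_left hstep
        (le_of_lt (by positivity : (0:ℝ) < (m : ℝ) * ((n : ℝ) - 1)))
    rw [mul_div_cancel₀] at h2
    · nlinarith [mul_le_mul_of_nonneg_left h2
        (le_of_lt (by positivity : (0:ℝ) < η * ηL * (m : ℝ)))]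
    · positivity
  have hfin : (L * η ^ 2 * ηL ^ 2 * ((n : ℝ) - 1) / (2 * (n : ℝ) * (m : ℝ) * ((m : ℝ) - 1))
      - η * ηL / (2 * (K : ℝ) * (m : ℝ) ^ 2)) * T ≤ 0 :=
    mul_nonpos_of_nonpos_of_nonneg (sub_nonpos.mpr hcoef) hT0
  linarith [heq, hfin]
end
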